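/- arXiv:2310.14275 — 2 statements merged into one kernel-verified Lean document; each statement's English description precedes it below -/
import Mathlib

section
/- Let 0 ≤ λ ≤ ρ < 1, m ∈ ℝ, and k ∈ ℕ_0. If σ_k : ℝ^n × ℝ^n → ℂ is smooth and satisfies |∂_x^α ∂_ξ^β σ_k(x,ξ)| ≤ C_{α,β} (1+|ξ|)^{m−ρ(|β|−|α|)} · 1_{{1+|ξ| ∼ 2^k}} for all multi-indices α, β, then the dilated symbol c_k(x,ξ) := σ_k(2^{−λk}x, 2^{λk}ξ) satisfies |∂_x^α ∂_ξ^β c_k(x,ξ)| ≤ C'_{α,β} (1+|ξ|)^{m/(1−λ) − ((ρ−λ)/(1−λ))(|β|−|α|)} with constants C'_{α,β} independent of k. -/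
open MeasureTheory Real ENNReal

noncomputable section

/-- Partial derivative of a symbol `σ(x,ξ)` in the `i`-th coordinate of `x`. -/
def pdX {n : ℕ} (i : Fin n) (σ : EuclideanSpace ℝ (Fin n) → EuclideanSpace ℝ (Fin n) → ℂ) :
    EuclideanSpace ℝ (Fin n) → EuclideanSpace ℝ (Fin n) → ℂ :=
  fun x ξ => fderiv ℝ (fun y => σ y ξ) x (EuclideanSpace.single i 1)

/-- Partial derivative of a symbol `σ(x,ξ)` in the `i`-th coordinate of `ξ`. -/
def pdXi {n : ℕ} (i : Fin n) (σ : EuclideanSpace ℝ (Fin n) → EuclideanSpace ℝ (Fin n) → ℂ) :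
    EuclideanSpace ℝ (Fin n) → EuclideanSpace ℝ (Fin n) → ℂ :=
  fun x ξ => fderiv ℝ (σ x) ξ (EuclideanSpace.single i 1)

/-- Iterated partial derivative `∂_x^α ∂_ξ^β σ`, where the multi-indices are encoded
as lists of coordinate directions (`|α| = A.length`, `|β| = B.length`). -/
def symbolDeriv {n : ℕ} (A B : List (Fin n))
    (σ : EuclideanSpace ℝ (Fin n) → EuclideanSpace ℝ (Fin n) → ℂ) :
    EuclideanSpace ℝ (Fin n) → EuclideanSpace ℝ (Fin n) → ℂ :=
  A.foldr pdX (B.foldr pdXi σ)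


section Aux

variable {n : ℕ}

local notation "E" => EuclideanSpace ℝ (Fin n)

def Dv (v : E × E) (F : E × E → ℂ) : E × E → ℂ := fun p => fderiv ℝ F p v

lemma Dv_contDiff {v : E × E} {F : E × E → ℂ} (hF : ContDiff ℝ (⊤ : ℕ∞) F) :
    ContDiff ℝ (⊤ : ℕ∞) (Dv v F) :=
  (hF.fderiv_right (by simp)).clm_apply contDiff_const

def multiDv (V : List (E × E)) (F : E × E → ℂ) : E × E → ℂ := V.foldr Dv F

lemma multiDv_contDiff {V : List (E × E)} {F : E × E → ℂ} (hF : ContDiff ℝ (⊤ : ℕ∞) F) :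
    ContDiff ℝ (⊤ : ℕ∞) (multiDv V F) := by
  induction V with
  | nil => exact hF
  | cons v V ih => exact Dv_contDiff ih

def fX (i : Fin n) : E × E := (EuclideanSpace.single i 1, 0)
def fXi (i : Fin n) : E × E := (0, EuclideanSpace.single i 1)

lemma pdXi_join {G : E × E → ℂ} (hG : ContDiff ℝ (⊤ : ℕ∞) G) (i : Fin n) (x ξ : E) :
    pdXi i (fun y η => G (y, η)) x ξ = Dv (fXi i) G (x, ξ) := by
  have h1 := ((hG.differentiable (by simp)) (x, ξ)).hasFDerivAt
  have h2 := hasFDerivAt_prodMk_right (𝕜 := ℝ) x ξ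
  have h3 : HasFDerivAt (fun η => G (x, η))
      ((fderiv ℝ G (x, ξ)).comp (ContinuousLinearMap.inr ℝ _ _)) ξ := h1.comp ξ h2
  simp only [pdXi, Dv, fXi, h3.fderiv, ContinuousLinearMap.comp_apply,
    ContinuousLinearMap.inr_apply]

lemma pdX_join {G : E × E → ℂ} (hG : ContDiff ℝ (⊤ : ℕ∞) G) (i : Fin n) (x ξ : E) :
    pdX i (fun y η => G (y, η)) x ξ = Dv (fX i) G (x, ξ) := by
  have h1 := ((hG.differentiable (by simp)) (x, ξ)).hasFDerivAt
  have h2 := hasFDerivAt_prodMk_left (𝕜 := ℝ) x ξ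
  have h3 : HasFDerivAt (fun y => G (y, ξ))
      ((fderiv ℝ G (x, ξ)).comp (ContinuousLinearMap.inl ℝ _ _)) x := h1.comp x h2
  simp only [pdX, Dv, fX, h3.fderiv, ContinuousLinearMap.comp_apply,
    ContinuousLinearMap.inl_apply]

lemma foldXi_join {G : E × E → ℂ} (hG : ContDiff ℝ (⊤ : ℕ∞) G) (B : List (Fin n)) (x ξ : E) :
    B.foldr pdXi (fun y η => G (y, η)) x ξ = multiDv (B.map fXi) G (x, ξ) := by
  induction B generalizing x ξ with
  | nil => rfl
  | cons i B ih =>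
      have hH : ContDiff ℝ (⊤ : ℕ∞) (multiDv (B.map fXi) G) := multiDv_contDiff hG
      have heq : B.foldr pdXi (fun y η => G (y, η)) = fun y η => multiDv (B.map fXi) G (y, η) :=
        funext fun y => funext fun η => ih y η
      show pdXi i (B.foldr pdXi (fun y η => G (y, η))) x ξ = _
      rw [heq, pdXi_join hH]
      rfl

lemma foldX_join {G : E × E → ℂ} (hG : ContDiff ℝ (⊤ : ℕ∞) G) (A : List (Fin n)) (x ξ : E) :
    A.foldr pdX (fun y η => G (y, η)) x ξ = multiDv (A.map fX) G (x, ξ) := by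
  induction A generalizing x ξ with
  | nil => rfl
  | cons i A ih =>
      have hH : ContDiff ℝ (⊤ : ℕ∞) (multiDv (A.map fX) G) := multiDv_contDiff hG
      have heq : A.foldr pdX (fun y η => G (y, η)) = fun y η => multiDv (A.map fX) G (y, η) :=
        funext fun y => funext fun η => ih y η
      show pdX i (A.foldr pdX (fun y η => G (y, η))) x ξ = _
      rw [heq, pdX_join hH]
      rfl

lemma symbolDeriv_join {G : E × E → ℂ} (hG : ContDiff ℝ (⊤ : ℕ∞) G) (A B : List (Fin n)) (x ξ : E) :
    symbolDeriv A B (fun y η => G (y, η)) x ξ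
      = multiDv (A.map fX ++ B.map fXi) G (x, ξ) := by
  have hH : ContDiff ℝ (⊤ : ℕ∞) (multiDv (B.map fXi) G) := multiDv_contDiff hG
  have heq : B.foldr pdXi (fun y η => G (y, η))
      = fun y η => multiDv (B.map fXi) G (y, η) :=
    funext fun y => funext fun η => foldXi_join hG B y η
  unfold symbolDeriv
  rw [heq, foldX_join hH]
  show multiDv (A.map fX) (multiDv (B.map fXi) G) (x, ξ) = _
  rw [show multiDv (A.map fX ++ B.map fXi) G = multiDv (A.map fX) (multiDv (B.map fXi) G) from
    List.foldr_append]

lemma Dv_comp_clm {G : E × E → ℂ} (hG : ContDiff ℝ (⊤ : ℕ∞) G) (L : (E × E) →L[ℝ] (E × E))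
    (v : E × E) : Dv v (fun p => G (L p)) = fun p => Dv (L v) G (L p) := by
  funext p
  have h1 := ((hG.differentiable (by simp)) (L p)).hasFDerivAt
  have h3 : HasFDerivAt (fun q => G (L q)) ((fderiv ℝ G (L p)).comp L) p :=
    h1.comp p L.hasFDerivAt
  simp [Dv, h3.fderiv]

lemma multiDv_comp_clm {G : E × E → ℂ} (hG : ContDiff ℝ (⊤ : ℕ∞) G) (L : (E × E) →L[ℝ] (E × E)) :
    ∀ V : List (E × E), multiDv V (fun p => G (L p)) = fun p => multiDv (V.map L) G (L p) := by
  intro V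
  induction V with
  | nil => rfl
  | cons v V ih =>
      show Dv v (multiDv V (fun p => G (L p))) = _
      rw [ih, Dv_comp_clm (multiDv_contDiff hG) L v]
      rfl

lemma Dv_smul_vec (t : ℝ) (v : E × E) (F : E × E → ℂ) : Dv (t • v) F = t • Dv v F :=
  funext fun p => (fderiv ℝ F p).map_smul t v

lemma Dv_const_smul {F : E × E → ℂ} (hF : ContDiff ℝ (⊤ : ℕ∞) F) (t : ℝ) (v : E × E) :
    Dv v (t • F) = t • Dv v F := by
  funext p
  show fderiv ℝ (fun q => t • F q) p v = t • fderiv ℝ F p v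
  rw [fderiv_fun_const_smul ((hF.differentiable (by simp)) p) t]
  rfl

lemma multiDv_const_smul {F : E × E → ℂ} (hF : ContDiff ℝ (⊤ : ℕ∞) F) (t : ℝ) :
    ∀ V : List (E × E), multiDv V (t • F) = t • multiDv V F := by
  intro V
  induction V with
  | nil => rfl
  | cons v V ih =>
      show Dv v (multiDv V (t • F)) = _
      rw [ih, Dv_const_smul (multiDv_contDiff hF) t v]
      rfl

lemma multiDv_map_smul {G : E × E → ℂ} (hG : ContDiff ℝ (⊤ : ℕ∞) G) (t : ℝ) :
    ∀ V : List (E × E), multiDv (V.map (t • ·)) G = t ^ V.length • multiDv V G := by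
  intro V
  induction V with
  | nil => simp [multiDv]
  | cons v V ih =>
      show Dv (t • v) (multiDv (V.map (t • ·)) G) = _
      rw [ih, Dv_smul_vec, Dv_const_smul (multiDv_contDiff hG)]
      funext p
      show t • (t ^ V.length • Dv v (multiDv V G) p) = t ^ (V.length + 1) • _
      rw [smul_smul, ← pow_succ']
      rfl

lemma symbolDeriv_dilate (σ : EuclideanSpace ℝ (Fin n) → EuclideanSpace ℝ (Fin n) → ℂ)
    (hs : ContDiff ℝ (⊤ : ℕ∞) (fun p : E × E => σ p.1 p.2)) (a b : ℝ) (A B : List (Fin n))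
    (x ξ : E) :
    symbolDeriv A B (fun y η => σ (a • y) (b • η)) x ξ
      = (a ^ A.length * b ^ B.length) • symbolDeriv A B σ (a • x) (b • ξ) := by
  set G : E × E → ℂ := fun p => σ p.1 p.2 with hGdef
  set L : (E × E) →L[ℝ] (E × E) :=
    (a • ContinuousLinearMap.id ℝ E).prodMap (b • ContinuousLinearMap.id ℝ E) with hLdef
  have hL : ∀ p : E × E, L p = (a • p.1, b • p.2) := fun p => rfl
  have hGL : ContDiff ℝ (⊤ : ℕ∞) (fun p : E × E => G (L p)) := hs.comp L.contDiff
  have hfun : (fun y η => σ (a • y) (b • η))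
      = fun y η => (fun p : E × E => G (L p)) (y, η) := by
    funext y η
    simp [hGdef, hL]
  have step1 : symbolDeriv A B (fun y η => σ (a • y) (b • η)) x ξ
      = multiDv ((A.map fX ++ B.map fXi).map L) G (L (x, ξ)) := by
    rw [hfun, symbolDeriv_join hGL, multiDv_comp_clm hs]
  have hmapA : (A.map fX).map L = (A.map fX).map (a • ·) := by
    simp only [List.map_map]
    refine List.map_congr_left fun i _ => ?_
    show L (fX i) = a • fX i
    rw [hL]
    simp [fX, Prod.smul_mk]
  have hmapB : (B.map fXi).map L = (B.map fXi).map (b • ·) := by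
    simp only [List.map_map]
    refine List.map_congr_left fun i _ => ?_
    show L (fXi i) = b • fXi i
    rw [hL]
    simp [fXi, Prod.smul_mk]
  have step2 : multiDv ((A.map fX ++ B.map fXi).map L) G
      = (a ^ A.length * b ^ B.length) • multiDv (A.map fX ++ B.map fXi) G := by
    rw [List.map_append, hmapA, hmapB]
    have e1 : multiDv ((A.map fX).map (a • ·) ++ (B.map fXi).map (b • ·)) G
        = multiDv ((A.map fX).map (a • ·)) (multiDv ((B.map fXi).map (b • ·)) G) :=
      List.foldr_append
    rw [e1, multiDv_map_smul hs, multiDv_const_smul (multiDv_contDiff hs),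
      multiDv_map_smul (multiDv_contDiff hs)]
    funext p
    show b ^ _ • (a ^ _ • multiDv _ (multiDv _ G) p) = _
    rw [smul_smul, mul_comm]
    have e2 : multiDv (A.map fX) (multiDv (B.map fXi) G)
        = multiDv (A.map fX ++ B.map fXi) G := (List.foldr_append).symm
    simp [e2, List.length_map]
  have step3 : multiDv (A.map fX ++ B.map fXi) G (L (x, ξ))
      = symbolDeriv A B σ (a • x) (b • ξ) := by
    rw [hL]
    exact (symbolDeriv_join hs A B (a • x) (b • ξ)).symm
  rw [step1, step2]
  show (a ^ A.length * b ^ B.length) • multiDv (A.map fX ++ B.map fXi) G (L (x, ξ)) = _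
  rw [step3]

lemma sandwich_rpow {w x cc e : ℝ} (hw : 0 < w) (hc : 1 ≤ cc) (h1 : cc⁻¹ * w ≤ x)
    (h2 : x ≤ cc * w) : x ^ e ≤ cc ^ |e| * w ^ e := by
  have hcc : 0 < cc := lt_of_lt_of_le one_pos hc
  have hpw : 0 < cc⁻¹ * w := by positivity
  have hx : 0 < x := lt_of_lt_of_le hpw h1
  rcases le_or_gt 0 e with he | he
  · rw [abs_of_nonneg he]
    calc x ^ e ≤ (cc * w) ^ e := Real.rpow_le_rpow hx.le h2 he
      _ = cc ^ e * w ^ e := Real.mul_rpow hcc.le hw.le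
  · rw [abs_of_neg he]
    calc x ^ e ≤ (cc⁻¹ * w) ^ e := Real.rpow_le_rpow_of_nonpos hpw h1 he.le
      _ = cc ^ (-e) * w ^ e := by
          rw [Real.mul_rpow (by positivity) hw.le, Real.inv_rpow hcc.le,
            ← Real.rpow_neg hcc.le]


end Aux

/-- **Dilated symbol estimate.** Let `0 ≤ λ ≤ ρ < 1`, `m ∈ ℝ`. If the smooth symbols `σ_k`
satisfy `|∂_x^α ∂_ξ^β σ_k(x,ξ)| ≤ C_{α,β} (1+|ξ|)^{m−ρ(|β|−|α|)} 1_{1+|ξ|∼2^k}` (with the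
indicator of `c⁻¹2^k ≤ 1+|ξ| ≤ c·2^k` for a fixed `c ≥ 1`), uniformly in `k`, then the
dilated symbols `c_k(x,ξ) = σ_k(2^{−λk}x, 2^{λk}ξ)` satisfy
`|∂_x^α ∂_ξ^β c_k(x,ξ)| ≤ C'_{α,β} (1+|ξ|)^{m/(1−λ)−((ρ−λ)/(1−λ))(|β|−|α|)}` uniformly in `k`. -/
theorem dilated_symbol_estimate (n : ℕ) (m ρ lam : ℝ) (hlam0 : 0 ≤ lam) (hlamρ : lam ≤ ρ)
    (hρ : ρ < 1) (c : ℝ) (hc : 1 ≤ c)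
    (σ : ℕ → EuclideanSpace ℝ (Fin n) → EuclideanSpace ℝ (Fin n) → ℂ)
    (hsmooth : ∀ k, ContDiff ℝ (⊤ : ℕ∞)
      (fun p : EuclideanSpace ℝ (Fin n) × EuclideanSpace ℝ (Fin n) => σ k p.1 p.2))
    (hσ : ∀ A B : List (Fin n), ∃ C > 0, ∀ (k : ℕ) (x ξ : EuclideanSpace ℝ (Fin n)),
      ‖symbolDeriv A B (σ k) x ξ‖ ≤
        C * (1 + ‖ξ‖) ^ (m - ρ * ((B.length : ℝ) - (A.length : ℝ))) *
          (if c⁻¹ * 2 ^ k ≤ 1 + ‖ξ‖ ∧ 1 + ‖ξ‖ ≤ c * 2 ^ k then 1 else 0)) :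
    ∀ A B : List (Fin n), ∃ C > 0, ∀ (k : ℕ) (x ξ : EuclideanSpace ℝ (Fin n)),
      ‖symbolDeriv A B
          (fun y η => σ k ((2 : ℝ) ^ (-(lam * k)) • y) ((2 : ℝ) ^ (lam * k) • η)) x ξ‖ ≤
        C * (1 + ‖ξ‖) ^
          (m / (1 - lam) - ((ρ - lam) / (1 - lam)) * ((B.length : ℝ) - (A.length : ℝ))) := by
  intro A B
  obtain ⟨C, hC, hbound⟩ := hσ A B
  have hlam1 : lam < 1 := lt_of_le_of_lt hlamρ hρ
  have h1lam : (0:ℝ) < 1 - lam := by linarith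
  have hcpos : (0:ℝ) < c := lt_of_lt_of_le one_pos hc
  have hcpos1 : (0:ℝ) < 1 + c := by linarith
  set d : ℝ := (B.length : ℝ) - (A.length : ℝ) with hd
  set Ef : ℝ := m / (1 - lam) - ((ρ - lam) / (1 - lam)) * d with hEf
  refine ⟨C * c ^ |m - ρ * d| * (1 + c) ^ |Ef|,
    mul_pos (mul_pos hC (Real.rpow_pos_of_pos hcpos _)) (Real.rpow_pos_of_pos hcpos1 _), ?_⟩
  intro k x ξ
  set a : ℝ := (2 : ℝ) ^ (-(lam * (k:ℝ))) with ha
  set b : ℝ := (2 : ℝ) ^ (lam * (k:ℝ)) with hb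
  have hapos : 0 < a := Real.rpow_pos_of_pos two_pos _
  have hbpos : 0 < b := Real.rpow_pos_of_pos two_pos _
  have hb1 : 1 ≤ b := by
    rw [hb, show (1:ℝ) = (2:ℝ) ^ (0:ℝ) from (Real.rpow_zero 2).symm]
    exact Real.rpow_le_rpow_of_exponent_le one_le_two (by positivity)
  set t : ℝ := 1 + ‖ξ‖ with ht
  have ht1 : 1 ≤ t := by simp [ht, norm_nonneg]
  have htpos : 0 < t := lt_of_lt_of_le one_pos ht1
  have hdil := symbolDeriv_dilate (σ k) (hsmooth k) a b A B x ξ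
  rw [hdil, norm_smul]
  have hnormb : ‖b • ξ‖ = b * ‖ξ‖ := by
    rw [norm_smul, Real.norm_eq_abs, abs_of_pos hbpos]
  have hscal : ‖a ^ A.length * b ^ B.length‖ = (2:ℝ) ^ (lam * (k:ℝ) * d) := by
    rw [Real.norm_eq_abs, abs_of_pos (by positivity), ha, hb,
      ← Real.rpow_natCast ((2:ℝ) ^ (-(lam * (k:ℝ)))) A.length,
      ← Real.rpow_natCast ((2:ℝ) ^ (lam * (k:ℝ))) B.length,
      ← Real.rpow_mul (by norm_num : (0:ℝ) ≤ 2),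
      ← Real.rpow_mul (by norm_num : (0:ℝ) ≤ 2),
      ← Real.rpow_add two_pos]
    congr 1
    rw [hd]; ring
  rw [hscal]
  have hb2 := hbound k (a • x) (b • ξ)
  rw [hnormb] at hb2
  by_cases hcase : c⁻¹ * 2 ^ k ≤ 1 + b * ‖ξ‖ ∧ 1 + b * ‖ξ‖ ≤ c * 2 ^ k
  · obtain ⟨h1, h2⟩ := hcase
    rw [if_pos ⟨h1, h2⟩, mul_one] at hb2
    set K : ℝ := (2:ℝ) ^ (k:ℝ) with hK
    have hKeq : ((2:ℝ) ^ k : ℝ) = K := (Real.rpow_natCast 2 k).symm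
    have hKpos : 0 < K := Real.rpow_pos_of_pos two_pos _
    rw [hKeq] at h1 h2
    set u : ℝ := (2:ℝ) ^ ((1 - lam) * (k:ℝ)) with hu
    have hupos : 0 < u := Real.rpow_pos_of_pos two_pos _
    have hu1 : 1 ≤ u := by
      have h5 := Real.rpow_le_rpow_of_exponent_le one_le_two
        (mul_nonneg h1lam.le (Nat.cast_nonneg k) : (0:ℝ) ≤ (1 - lam) * (k:ℝ))
      rwa [Real.rpow_zero] at h5
    have hub : u * b = K := by
      rw [hu, hb, hK, ← Real.rpow_add two_pos]
      congr 1; ring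
    have hstb : 1 + b * ‖ξ‖ ≤ b * t := by
      rw [ht, mul_add, mul_one]
      linarith
    have huct : u ≤ c * t := by
      have h3 : u * b ≤ (c * t) * b := by
        rw [hub]
        calc K = c * (c⁻¹ * K) := by field_simp
          _ ≤ c * (b * t) := mul_le_mul_of_nonneg_left (le_trans h1 hstb) hcpos.le
          _ = (c * t) * b := by ring
      exact le_of_mul_le_mul_right h3 hbpos
    have htcu : t ≤ (1 + c) * u := by
      have hxi : ‖ξ‖ * b ≤ (c * u) * b := by
        calc ‖ξ‖ * b = b * ‖ξ‖ := mul_comm _ _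
          _ ≤ c * K := by linarith
          _ = (c * u) * b := by rw [← hub]; ring
      have hxi' : ‖ξ‖ ≤ c * u := le_of_mul_le_mul_right hxi hbpos
      calc t = 1 + ‖ξ‖ := ht
        _ ≤ u + c * u := by linarith
        _ = (1 + c) * u := by ring
    have hs1 : (1 + b * ‖ξ‖) ^ (m - ρ * d) ≤ c ^ |m - ρ * d| * K ^ (m - ρ * d) :=
      sandwich_rpow hKpos hc h1 h2
    have hs2 : u ^ Ef ≤ (1 + c) ^ |Ef| * t ^ Ef := by
      refine sandwich_rpow htpos (by linarith) ?_ ?_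
      · rw [inv_mul_le_iff₀ hcpos1]
        exact htcu
      · calc u ≤ c * t := huct
          _ ≤ (1 + c) * t := mul_le_mul_of_nonneg_right (by linarith) htpos.le
    have hexp : (2:ℝ) ^ (lam * (k:ℝ) * d) * K ^ (m - ρ * d) = u ^ Ef := by
      rw [hK, hu, ← Real.rpow_mul (by norm_num : (0:ℝ) ≤ 2),
        ← Real.rpow_mul (by norm_num : (0:ℝ) ≤ 2), ← Real.rpow_add two_pos]
      congr 1
      rw [hEf]
      field_simp
      ring
    calc (2:ℝ) ^ (lam * (k:ℝ) * d) * ‖symbolDeriv A B (σ k) (a • x) (b • ξ)‖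
        ≤ (2:ℝ) ^ (lam * (k:ℝ) * d) * (C * (1 + b * ‖ξ‖) ^ (m - ρ * d)) :=
          mul_le_mul_of_nonneg_left hb2 (Real.rpow_pos_of_pos two_pos _).le
      _ ≤ (2:ℝ) ^ (lam * (k:ℝ) * d) * (C * (c ^ |m - ρ * d| * K ^ (m - ρ * d))) :=
          mul_le_mul_of_nonneg_left (mul_le_mul_of_nonneg_left hs1 hC.le)
            (Real.rpow_pos_of_pos two_pos _).le
      _ = C * c ^ |m - ρ * d| * ((2:ℝ) ^ (lam * (k:ℝ) * d) * K ^ (m - ρ * d)) := by ring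
      _ = C * c ^ |m - ρ * d| * u ^ Ef := by rw [hexp]
      _ ≤ C * c ^ |m - ρ * d| * ((1 + c) ^ |Ef| * t ^ Ef) :=
          mul_le_mul_of_nonneg_left hs2
            (mul_pos hC (Real.rpow_pos_of_pos hcpos _)).le
      _ = C * c ^ |m - ρ * d| * (1 + c) ^ |Ef| * t ^ Ef := by ring
  · rw [if_neg hcase, mul_zero] at hb2
    have hz : ‖symbolDeriv A B (σ k) (a • x) (b • ξ)‖ = 0 :=
      le_antisymm hb2 (norm_nonneg _)
    rw [hz, mul_zero]
    exact (mul_pos (mul_pos (mul_pos hC (Real.rpow_pos_of_pos hcpos _))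
      (Real.rpow_pos_of_pos hcpos1 _)) (Real.rpow_pos_of_pos htpos _)).le
end
end

section
/- Let x, y ∈ Q for a cube Q in ℝ^n, let P be a concentric dilate of Q with ℓ(P) ≥ 10√n·l·ℓ(Q) (l ≥ 1), let 1 ≤ κ ≤ l−1, and let u_1,…,u_κ ∈ P and u_{κ+1},…,u_l ∈ P^c. Then |y−u_{κ+1}|+⋯+|y−u_l| ≳_{l,n} ℓ(P) + |x−u_1|+⋯+|x−u_l|. -/
/-!
A point of `Q` lies within `√n·ℓ(Q)/2 ≤ ℓ(P)/20` of the centre, while a point outside `P` lies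
at distance more than `ℓ(P)/2` from it. Hence every outer `u_j` is at distance `≳ ℓ(P)` from
both `x` and `y`, so `|x - u_j| ≤ 2|y - u_j|`, and the single outer point `u_κ` already gives
`ℓ(P) ≲ ∑_{j > κ} |y - u_j|`. The inner `u_j` satisfy `|x - u_j| ≲ √n·ℓ(P)`, which is then also
controlled by that sum.
-/

open Real

noncomputable section

/-- Axis-parallel cube in `ℝⁿ` with center `c` and side-length `ℓ`. -/
def cube {n : ℕ} (c : EuclideanSpace ℝ (Fin n)) (ℓ : ℝ) : Set (EuclideanSpace ℝ (Fin n)) :=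
  {y | ∀ i, |y i - c i| ≤ ℓ / 2}

theorem EuclideanSpace.norm_le_sqrt_card_mul {ι : Type*} [Fintype ι] (v : EuclideanSpace ℝ ι)
    {r : ℝ} (hr : 0 ≤ r) (h : ∀ i, |v i| ≤ r) : ‖v‖ ≤ √(Fintype.card ι) * r := by
  have hsum : ∑ i, ‖v i‖ ^ 2 ≤ Fintype.card ι * r ^ 2 := by
    simpa using Finset.sum_le_card_nsmul Finset.univ (fun i => ‖v i‖ ^ 2) (r ^ 2)
      fun i _ => pow_le_pow_left₀ (norm_nonneg _) (h i) 2
  calc ‖v‖ = √(∑ i, ‖v i‖ ^ 2) := EuclideanSpace.norm_eq v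
    _ ≤ √(Fintype.card ι * r ^ 2) := Real.sqrt_le_sqrt hsum
    _ = √(Fintype.card ι) * r := by rw [Real.sqrt_mul (Nat.cast_nonneg _), Real.sqrt_sq hr]

section Cube

variable {n : ℕ} {c x y u : EuclideanSpace ℝ (Fin n)} {ℓ ℓQ ℓP : ℝ}

theorem norm_sub_center_le_of_mem_cube (hℓ : 0 ≤ ℓ) (hx : x ∈ cube c ℓ) :
    ‖x - c‖ ≤ √n * ℓ / 2 := by
  simpa [mul_div_assoc] using
    EuclideanSpace.norm_le_sqrt_card_mul (x - c) (by linarith) fun i => hx i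

theorem norm_sub_le_of_mem_cube (hℓ : 0 ≤ ℓ) (hx : x ∈ cube c ℓ) (hy : y ∈ cube c ℓ) :
    ‖x - y‖ ≤ √n * ℓ := by
  have := norm_sub_le_norm_sub_add_norm_sub x c y
  rw [norm_sub_rev c y] at this
  linarith [norm_sub_center_le_of_mem_cube hℓ hx, norm_sub_center_le_of_mem_cube hℓ hy]

theorem half_lt_norm_sub_center_of_notMem_cube (hu : u ∉ cube c ℓ) : ℓ / 2 < ‖u - c‖ := by
  obtain ⟨i, hi⟩ : ∃ i, ℓ / 2 < |u i - c i| := by simpa [cube] using hu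
  exact hi.trans_le (PiLp.norm_apply_le (u - c) i)

theorem norm_sub_le_of_mem_cube_of_mem_cube (hQ : 0 ≤ ℓQ) (hP : 0 ≤ ℓP) (hx : x ∈ cube c ℓQ)
    (hu : u ∈ cube c ℓP) : ‖x - u‖ ≤ √n * (ℓQ + ℓP) / 2 := by
  have := norm_sub_le_norm_sub_add_norm_sub x c u
  rw [norm_sub_rev c u] at this
  linarith [norm_sub_center_le_of_mem_cube hQ hx, norm_sub_center_le_of_mem_cube hP hu]

theorem sub_lt_norm_sub_of_mem_cube_of_notMem_cube (hQ : 0 ≤ ℓQ) (hx : x ∈ cube c ℓQ)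
    (hu : u ∉ cube c ℓP) : ℓP / 2 - √n * ℓQ / 2 < ‖x - u‖ := by
  have := norm_sub_le_norm_sub_add_norm_sub u x c
  rw [norm_sub_rev u x] at this
  linarith [norm_sub_center_le_of_mem_cube hQ hx, half_lt_norm_sub_center_of_notMem_cube hu]

end Cube

section WellSeparatedCubes

variable {n : ℕ} {c x y u : EuclideanSpace ℝ (Fin n)} {ℓQ ℓP : ℝ}
  (hQ : 0 ≤ ℓQ) (hQP : 10 * √n * ℓQ ≤ ℓP)
include hQ hQP

theorem le_three_mul_norm_sub_of_notMem_cube (hy : y ∈ cube c ℓQ) (hu : u ∉ cube c ℓP) :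
    ℓP ≤ 3 * ‖y - u‖ := by
  have := sub_lt_norm_sub_of_mem_cube_of_notMem_cube hQ hy hu
  nlinarith [norm_nonneg (y - u)]

theorem norm_sub_le_two_mul_of_notMem_cube (hx : x ∈ cube c ℓQ) (hy : y ∈ cube c ℓQ)
    (hu : u ∉ cube c ℓP) : ‖x - u‖ ≤ 2 * ‖y - u‖ := by
  have hxy := norm_sub_le_of_mem_cube hQ hx hy
  have hyu := sub_lt_norm_sub_of_mem_cube_of_notMem_cube hQ hy hu
  have : 0 ≤ √n * ℓQ := by positivity
  linarith [norm_sub_le_norm_sub_add_norm_sub x y u]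

theorem norm_sub_le_of_mem_cube_of_mem_larger_cube (hx : x ∈ cube c ℓQ) (hu : u ∈ cube c ℓP) :
    ‖x - u‖ ≤ (1 + √n) * ℓP := by
  have hP : 0 ≤ ℓP := le_trans (by positivity) hQP
  have := norm_sub_le_of_mem_cube_of_mem_cube hQ hP hx hu
  nlinarith [Real.sqrt_nonneg n]

theorem sum_norm_sub_le_of_mem_cube {ι : Type*} [Fintype ι] (s : Finset ι)
    (hx : x ∈ cube c ℓQ) (hy : y ∈ cube c ℓQ) (u : ι → EuclideanSpace ℝ (Fin n))
    (hin : ∀ j ∉ s, u j ∈ cube c ℓP) (hout : ∀ j ∈ s, u j ∉ cube c ℓP) :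
    ∑ j, ‖x - u j‖ ≤ Fintype.card ι * ((1 + √n) * ℓP) + 2 * ∑ j ∈ s, ‖y - u j‖ := by
  classical
  have hP : 0 ≤ (1 + √n) * ℓP := by
    have : 0 ≤ ℓP := le_trans (by positivity) hQP
    positivity
  have hinner : ∑ j ∈ sᶜ, ‖x - u j‖ ≤ Fintype.card ι * ((1 + √n) * ℓP) :=
    calc ∑ j ∈ sᶜ, ‖x - u j‖ ≤ sᶜ.card • ((1 + √n) * ℓP) :=
          Finset.sum_le_card_nsmul _ _ _ fun j hj =>
            norm_sub_le_of_mem_cube_of_mem_larger_cube hQ hQP hx (hin j (Finset.mem_compl.1 hj))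
      _ ≤ Fintype.card ι * ((1 + √n) * ℓP) := by
          rw [nsmul_eq_mul]
          gcongr
          exact_mod_cast Finset.card_le_univ _
  have houter : ∑ j ∈ s, ‖x - u j‖ ≤ 2 * ∑ j ∈ s, ‖y - u j‖ := by
    rw [Finset.mul_sum]
    exact Finset.sum_le_sum fun j hj => norm_sub_le_two_mul_of_notMem_cube hQ hQP hx hy (hout j hj)
  rw [← Finset.sum_add_sum_compl s]
  linarith

end WellSeparatedCubes

theorem offdiagonal_cube_distance_estimate_general (n l : ℕ) :
    ∃ C > 0, ∀ (κ : ℕ), 1 ≤ κ → κ ≤ l - 1 →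
      ∀ (c : EuclideanSpace ℝ (Fin n)) (ℓQ ℓP : ℝ), 0 < ℓQ →
        10 * Real.sqrt n * l * ℓQ ≤ ℓP →
        ∀ x y : EuclideanSpace ℝ (Fin n), x ∈ cube c ℓQ → y ∈ cube c ℓQ →
          ∀ u : Fin l → EuclideanSpace ℝ (Fin n),
            (∀ j : Fin l, (j : ℕ) < κ → u j ∈ cube c ℓP) →
            (∀ j : Fin l, κ ≤ (j : ℕ) → u j ∉ cube c ℓP) →
            C * (ℓP + ∑ j, ‖x - u j‖) ≤
              ∑ j ∈ Finset.univ.filter (fun j : Fin l => κ ≤ (j : ℕ)), ‖y - u j‖ := by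
  -- `ℓP ≤ 3S`, the outer terms add `2S` and the inner ones `l(1 + √n)ℓP ≤ 3l(1 + √n)S`.
  refine ⟨(5 + 3 * l * (1 + √n))⁻¹, by positivity, ?_⟩
  intro κ hκ₁ hκl c ℓQ ℓP hℓQ hℓP x y hx hy u hin hout
  set s := Finset.univ.filter (fun j : Fin l => κ ≤ (j : ℕ)) with hs
  have hκ : κ < l := by omega
  have hQP : 10 * √n * ℓQ ≤ ℓP := by
    have : (1 : ℝ) ≤ l := by exact_mod_cast (by omega : 1 ≤ l)
    calc 10 * √n * ℓQ = 10 * √n * 1 * ℓQ := by ring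
      _ ≤ 10 * √n * l * ℓQ := by gcongr
      _ ≤ ℓP := hℓP
  have hℓP_le : ℓP ≤ 3 * ∑ j ∈ s, ‖y - u j‖ :=
    calc ℓP ≤ 3 * ‖y - u ⟨κ, hκ⟩‖ :=
          le_three_mul_norm_sub_of_notMem_cube hℓQ.le hQP hy (hout _ le_rfl)
      _ ≤ 3 * ∑ j ∈ s, ‖y - u j‖ := by
          gcongr
          exact Finset.single_le_sum (f := fun j => ‖y - u j‖) (fun j _ => norm_nonneg _)
            (show (⟨κ, hκ⟩ : Fin l) ∈ s from Finset.mem_filter.2 ⟨Finset.mem_univ _, le_refl κ⟩)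
  have hsum := sum_norm_sub_le_of_mem_cube hℓQ.le hQP s hx hy u
    (fun j hj => hin j (by simpa [hs] using hj)) (fun j hj => hout j (by simpa [hs] using hj))
  rw [Fintype.card_fin] at hsum
  rw [inv_mul_le_iff₀ (by positivity)]
  linarith [mul_le_mul_of_nonneg_left hℓP_le (by positivity : (0 : ℝ) ≤ l * (1 + √n))]

/-- **Geometric off-diagonal estimate.** Let `Q` and `P` be concentric axis-parallel
cubes in `ℝⁿ` with `ℓ(P) ≥ 10√n·l·ℓ(Q)` (`l ≥ 1`), let `x, y ∈ Q`, `1 ≤ κ ≤ l−1`,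
`u_1,…,u_κ ∈ P` and `u_{κ+1},…,u_l ∈ Pᶜ`. Then
`|y−u_{κ+1}|+⋯+|y−u_l| ≳_{l,n} ℓ(P) + |x−u_1|+⋯+|x−u_l|`. -/
theorem offdiagonal_cube_distance_estimate (n l : ℕ) (hl : 1 ≤ l) :
    ∃ C > 0, ∀ (κ : ℕ), 1 ≤ κ → κ ≤ l - 1 →
      ∀ (c : EuclideanSpace ℝ (Fin n)) (ℓQ ℓP : ℝ), 0 < ℓQ →
        10 * Real.sqrt n * l * ℓQ ≤ ℓP →
        ∀ x y : EuclideanSpace ℝ (Fin n), x ∈ cube c ℓQ → y ∈ cube c ℓQ →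
          ∀ u : Fin l → EuclideanSpace ℝ (Fin n),
            (∀ j : Fin l, (j : ℕ) < κ → u j ∈ cube c ℓP) →
            (∀ j : Fin l, κ ≤ (j : ℕ) → u j ∉ cube c ℓP) →
            C * (ℓP + ∑ j, ‖x - u j‖) ≤
              ∑ j ∈ Finset.univ.filter (fun j : Fin l => κ ≤ (j : ℕ)), ‖y - u j‖ :=
  offdiagonal_cube_distance_estimate_general n l
end
end
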